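/- arXiv:1909.02540 — 2 statements merged into one kernel-verified Lean document; each statement's English description precedes it below -/
import Mathlib

section
/- Let ρ be a full-rank density matrix on ℂ^d, let F be a nonempty closed set of density matrices on ℂ^d with R_F(ρ) < ∞, and let F' be a closed set of density matrices on ℂ^{d'}. Let (L, G) be a probabilistic free protocol from (F, ℂ^d) to (F', ℂ^{d'}), and let ψ ∈ ℂ^{d'} be a unit vector with |ψ⟩⟨ψ| ∉ F'. Then for every p > 0, L(ρ) ≠ p·|ψ⟩⟨ψ|. (Corollary: it is impossible to exactly transform a full-rank state into a pure resource state by any free protocol, even probabilistically.) -/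
/-!
Suppose `L ρ = p |ψ⟩⟨ψ|` and pick `ω = (ρ + s σ)/(1 + s) ∈ F`, so that `L ω = t ω'` with `ω' ∈ F'`.
Since `ω ≤ 1` as a state, `ρ ≥ λ_min(ρ) · 1 ≥ λ_min(ρ) · ω`, and positivity of `L` gives
`p |ψ⟩⟨ψ| ≥ λ_min(ρ) t ω'`, where `t > 0` because `L ρ ≤ (1 + s) L ω`. A positive semidefinite
matrix dominated by a multiple of a rank-one projection is its trace times that projection, so the
free state `ω'` is `|ψ⟩⟨ψ|` itself, contradicting `|ψ⟩⟨ψ| ∉ F'`.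
-/

open scoped Matrix ComplexOrder

noncomputable section

/-- A density matrix: a positive semidefinite complex matrix with unit trace. -/
def IsDensity {n : Type*} [Fintype n] (A : Matrix n n ℂ) : Prop :=
  A.PosSemidef ∧ A.trace = 1

/-- The smallest eigenvalue of a Hermitian matrix (`0` by convention otherwise). -/
noncomputable def minEig {n : Type*} [Fintype n] [DecidableEq n] (A : Matrix n n ℂ) : ℝ :=
  letI := Classical.propDecidable A.IsHermitian
  if h : A.IsHermitian then ⨅ i, h.eigenvalues i else 0

/-- The overlap `⟨ψ, A ψ⟩` (as a real number). -/
noncomputable def overlap {n : Type*} [Fintype n] (A : Matrix n n ℂ) (ψ : n → ℂ) : ℝ :=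
  (dotProduct (star ψ) (A.mulVec ψ)).re

/-- `f_ψ = sup_{ω ∈ F} ⟨ψ, ω ψ⟩`, with the convention `sup ∅ = 0`. -/
noncomputable def maxOverlap {n : Type*} [Fintype n] (F : Set (Matrix n n ℂ)) (ψ : n → ℂ) : ℝ :=
  sSup ((fun ω => overlap ω ψ) '' F)

/-- A positive map: it sends positive semidefinite matrices to positive semidefinite matrices. -/
def PosMap {n m : Type*} [Fintype n] [Fintype m]
    (Φ : Matrix n n ℂ →ₗ[ℂ] Matrix m m ℂ) : Prop :=
  ∀ X, X.PosSemidef → (Φ X).PosSemidef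

/-- A trace-preserving map. -/
def TracePreserving {n m : Type*} [Fintype n] [Fintype m]
    (Φ : Matrix n n ℂ →ₗ[ℂ] Matrix m m ℂ) : Prop :=
  ∀ X, (Φ X).trace = X.trace

/-- The feasible set for the generalized robustness:
`{ s ≥ 0 : ∃ density σ, (ρ + sσ)/(1+s) ∈ F }`.  Its nonemptiness encodes `R_F(ρ) < ∞`. -/
def RobustSet {n : Type*} [Fintype n] (F : Set (Matrix n n ℂ)) (ρ : Matrix n n ℂ) : Set ℝ :=
  {s : ℝ | 0 ≤ s ∧ ∃ σ : Matrix n n ℂ, IsDensity σ ∧ (1 + s)⁻¹ • (ρ + s • σ) ∈ F}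

/-- The generalized robustness `R_F(ρ)`. -/
noncomputable def Robustness {n : Type*} [Fintype n] (F : Set (Matrix n n ℂ))
    (ρ : Matrix n n ℂ) : ℝ :=
  sInf (RobustSet F ρ)

open Matrix
open scoped MatrixOrder

section Spectral

variable {n : Type*} [Fintype n] [DecidableEq n]

lemma minEig_smul_one_le {A : Matrix n n ℂ} (hA : A.IsHermitian) : (minEig A : ℂ) • 1 ≤ A := by
  simpa [Algebra.algebraMap_eq_smul_one] using
    (algebraMap_le_iff_le_spectrum (r := minEig A) hA.isSelfAdjoint).2 <| by
      rw [hA.spectrum_real_eq_range_eigenvalues]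
      rintro _ ⟨i, rfl⟩
      rw [minEig, dif_pos hA]
      exact ciInf_le (Set.finite_range _).bddBelow i

lemma IsDensity.le_one {ω : Matrix n n ℂ} (hω : IsDensity ω) : ω ≤ 1 := by
  obtain ⟨hpsd, htr⟩ := hω
  have hsum : ∑ j, hpsd.isHermitian.eigenvalues j = (1 : ℝ) := by
    have h : ((∑ j, hpsd.isHermitian.eigenvalues j : ℝ) : ℂ) = 1 := by
      push_cast
      exact hpsd.isHermitian.trace_eq_sum_eigenvalues.symm.trans htr
    exact_mod_cast h
  simpa using (le_algebraMap_iff_spectrum_le (r := (1 : ℝ)) hpsd.isHermitian.isSelfAdjoint).2 <| by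
    rw [hpsd.isHermitian.spectrum_real_eq_range_eigenvalues]
    rintro _ ⟨i, rfl⟩
    exact hsum ▸ Finset.single_le_sum (fun j _ => hpsd.eigenvalues_nonneg j) (Finset.mem_univ i)

lemma minEig_smul_le_of_isDensity {ρ ω : Matrix n n ℂ} (hρ : ρ.IsHermitian) (hc : 0 ≤ minEig ρ)
    (hω : IsDensity ω) : (minEig ρ : ℂ) • ω ≤ ρ :=
  calc (minEig ρ : ℂ) • ω ≤ (minEig ρ : ℂ) • 1 := by
        rw [le_iff, ← smul_sub]
        exact (le_iff.mp hω.le_one).smul (Complex.zero_le_real.mpr hc)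
    _ ≤ ρ := minEig_smul_one_le hρ

end Spectral

section RankOne

variable {n : Type*} [Fintype n] {ψ : n → ℂ}

lemma star_dotProduct_sub_smul_eq_zero (hψ : star ψ ⬝ᵥ ψ = 1) (v : n → ℂ) :
    star ψ ⬝ᵥ (v - (star ψ ⬝ᵥ v) • ψ) = 0 := by
  rw [dotProduct_sub, dotProduct_smul, hψ, smul_eq_mul, mul_one, sub_self]

lemma Matrix.PosSemidef.mulVec_eq_zero_of_le_smul_vecMulVec {A : Matrix n n ℂ}
    (hA : A.PosSemidef) {β : ℂ} (hle : A ≤ β • vecMulVec ψ (star ψ)) {w : n → ℂ}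
    (hw : star ψ ⬝ᵥ w = 0) : A *ᵥ w = 0 := by
  have hβ : (β • vecMulVec ψ (star ψ) - A) *ᵥ w = -(A *ᵥ w) := by
    rw [sub_mulVec, smul_mulVec, vecMulVec_mulVec, hw]
    simp
  have hneg := (le_iff.mp hle).dotProduct_mulVec_nonneg w
  rw [hβ, dotProduct_neg, neg_nonneg] at hneg
  exact (hA.dotProduct_mulVec_zero_iff w).mp (le_antisymm hneg (hA.dotProduct_mulVec_nonneg w))

lemma Matrix.PosSemidef.mulVec_eq_smul_of_le_smul_vecMulVec {A : Matrix n n ℂ}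
    (hA : A.PosSemidef) (hψ : star ψ ⬝ᵥ ψ = 1) {β : ℂ} (hle : A ≤ β • vecMulVec ψ (star ψ)) :
    A *ᵥ ψ = (star ψ ⬝ᵥ A *ᵥ ψ) • ψ := by
  set w := A *ᵥ ψ - (star ψ ⬝ᵥ A *ᵥ ψ) • ψ
  have hw : star ψ ⬝ᵥ w = 0 := star_dotProduct_sub_smul_eq_zero hψ _
  have hAw : A *ᵥ w = 0 := hA.mulVec_eq_zero_of_le_smul_vecMulVec hle hw
  have hwψ : star w ⬝ᵥ ψ = 0 := by
    have h := congrArg star hw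
    rwa [star_dotProduct, star_star, star_zero] at h
  have hwAψ : star w ⬝ᵥ A *ᵥ ψ = 0 :=
    calc star w ⬝ᵥ A *ᵥ ψ = star (A *ᵥ w) ⬝ᵥ ψ := by
          rw [star_mulVec, hA.isHermitian.eq, dotProduct_mulVec]
      _ = 0 := by rw [hAw, star_zero, zero_dotProduct]
  have hww : star w ⬝ᵥ w = 0 := by
    simp only [w, dotProduct_sub, dotProduct_smul, hwψ, hwAψ, smul_zero, sub_zero]
  exact sub_eq_zero.mp (dotProduct_star_self_eq_zero.mp hww)

lemma Matrix.PosSemidef.eq_trace_smul_of_le_smul_vecMulVec {A : Matrix n n ℂ}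
    (hA : A.PosSemidef) (hψ : star ψ ⬝ᵥ ψ = 1) {β : ℂ} (hle : A ≤ β • vecMulVec ψ (star ψ)) :
    A = A.trace • vecMulVec ψ (star ψ) := by
  set α := star ψ ⬝ᵥ A *ᵥ ψ
  have hA_eq : A = α • vecMulVec ψ (star ψ) := ext_iff_mulVec.mpr fun v => by
    have hv := hA.mulVec_eq_zero_of_le_smul_vecMulVec hle (star_dotProduct_sub_smul_eq_zero hψ v)
    rw [mulVec_sub, mulVec_smul, sub_eq_zero] at hv
    rw [hv, hA.mulVec_eq_smul_of_le_smul_vecMulVec hψ hle, smul_mulVec, vecMulVec_mulVec,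
      op_smul_eq_smul, smul_comm]
  have htr : A.trace = α := by
    conv_lhs => rw [hA_eq]
    rw [trace_smul, trace_vecMulVec, dotProduct_comm, hψ, smul_eq_mul, mul_one]
  rw [htr]
  exact hA_eq

lemma IsDensity.eq_vecMulVec_of_smul_le {ω : Matrix n n ℂ} (hω : IsDensity ω)
    (hψ : star ψ ⬝ᵥ ψ = 1) {k : ℝ} (hk : 0 < k) {β : ℂ}
    (hle : (k : ℂ) • ω ≤ β • vecMulVec ψ (star ψ)) : ω = vecMulVec ψ (star ψ) := by
  have hkω := (hω.1.smul (Complex.zero_le_real.mpr hk.le)).eq_trace_smul_of_le_smul_vecMulVec hψ hle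
  rw [trace_smul, hω.2, smul_eq_mul, mul_one] at hkω
  exact smul_right_injective _ (Complex.ofReal_ne_zero.mpr hk.ne') hkω

end RankOne

lemma PosMap.monotone {n m : Type*} [Fintype n] [Fintype m] {Φ : Matrix n n ℂ →ₗ[ℂ] Matrix m m ℂ}
    (hΦ : PosMap Φ) : Monotone Φ := fun X Y hXY => by
  simpa only [le_iff, map_sub] using hΦ _ hXY

theorem no_go_exact_purification_probabilistic_general {d d' : ℕ}
    (ρ : Matrix (Fin d) (Fin d) ℂ) (hρ : IsDensity ρ) (hρfull : 0 < minEig ρ)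
    (F : Set (Matrix (Fin d) (Fin d) ℂ))
    (hFden : ∀ ω ∈ F, IsDensity ω)
    (hRfin : (RobustSet F ρ).Nonempty)
    (F' : Set (Matrix (Fin d') (Fin d') ℂ))
    (hF'den : ∀ ω ∈ F', IsDensity ω)
    (L : Matrix (Fin d) (Fin d) ℂ →ₗ[ℂ] Matrix (Fin d') (Fin d') ℂ)
    (hLpos : PosMap L)
    (hLfree : ∀ ω ∈ F, ∃ t : ℝ, 0 ≤ t ∧ ∃ ω' ∈ F', L ω = (t : ℂ) • ω')
    (ψ : Fin d' → ℂ) (hψ : dotProduct (star ψ) ψ = 1)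
    (hψres : Matrix.vecMulVec ψ (star ψ) ∉ F') :
    ∀ p : ℝ, 0 < p → L ρ ≠ (p : ℂ) • Matrix.vecMulVec ψ (star ψ) := by
  intro p hp hLρ
  obtain ⟨s, hs, σ, hσ, hωF⟩ := hRfin
  obtain ⟨t, ht, ω', hω'F, hLω⟩ := hLfree _ hωF
  have htpos : 0 < t := by
    refine ht.lt_of_ne fun ht0 => ?_
    have hLρσ : L (ρ + s • σ) = 0 := by
      rw [← ht0, Complex.ofReal_zero, zero_smul, L.map_smul_of_tower, smul_eq_zero] at hLω
      exact hLω.resolve_left (by positivity)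
    have hLρ0 : L ρ = 0 := le_antisymm
      (hLρσ ▸ hLpos.monotone (le_add_of_nonneg_right (hσ.1.smul hs).nonneg))
      (hLpos ρ hρ.1).nonneg
    have htr := congrArg trace (hLρ.symm.trans hLρ0)
    rw [trace_smul, trace_vecMulVec, dotProduct_comm, hψ, trace_zero, smul_eq_mul, mul_one] at htr
    exact hp.ne' (Complex.ofReal_eq_zero.mp htr)
  have hle : ((minEig ρ * t : ℝ) : ℂ) • ω' ≤ (p : ℂ) • vecMulVec ψ (star ψ) := by
    have := hLpos.monotone (minEig_smul_le_of_isDensity hρ.1.isHermitian hρfull.le (hFden _ hωF))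
    rwa [map_smul, hLω, hLρ, smul_smul, ← Complex.ofReal_mul] at this
  have hω'_eq := (hF'den ω' hω'F).eq_vecMulVec_of_smul_le hψ (mul_pos hρfull htpos) hle
  exact hψres (hω'_eq ▸ hω'F)

/-- **Corollary.**  It is impossible to exactly transform a full-rank state into a pure resource
state by any free protocol, even probabilistically. -/
theorem no_go_exact_purification_probabilistic {d d' : ℕ}
    (ρ : Matrix (Fin d) (Fin d) ℂ) (hρ : IsDensity ρ) (hρfull : 0 < minEig ρ)
    (F : Set (Matrix (Fin d) (Fin d) ℂ)) (hFne : F.Nonempty) (hFcl : IsClosed F)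
    (hFden : ∀ ω ∈ F, IsDensity ω)
    (hRfin : (RobustSet F ρ).Nonempty)
    (F' : Set (Matrix (Fin d') (Fin d') ℂ)) (hF'cl : IsClosed F')
    (hF'den : ∀ ω ∈ F', IsDensity ω)
    (L G : Matrix (Fin d) (Fin d) ℂ →ₗ[ℂ] Matrix (Fin d') (Fin d') ℂ)
    (hLpos : PosMap L) (hGpos : PosMap G)
    (hTP : ∀ X, (L X).trace + (G X).trace = X.trace)
    (hLfree : ∀ ω ∈ F, ∃ t : ℝ, 0 ≤ t ∧ ∃ ω' ∈ F', L ω = (t : ℂ) • ω')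
    (ψ : Fin d' → ℂ) (hψ : dotProduct (star ψ) ψ = 1)
    (hψres : Matrix.vecMulVec ψ (star ψ) ∉ F') :
    ∀ p : ℝ, 0 < p → L ρ ≠ (p : ℂ) • Matrix.vecMulVec ψ (star ψ) :=
  no_go_exact_purification_probabilistic_general ρ hρ hρfull F hFden hRfin F' hF'den L hLpos hLfree
    ψ hψ hψres
end
end

section
/- Let σ₁, σ₂ be density matrices on ℂ^a, let ω₁, ω₂ be density matrices on ℂ^b, let p₁, p₂ ∈ [0,1], and let ε ∈ [0,1). Define the block-diagonal density matrices ρᵢ := diag(pᵢ·σᵢ, (1 − pᵢ)·ωᵢ) on ℂ^{a+b} (Matrix.fromBlocks with zero off-diagonal blocks) for i = 1, 2. Then β_ε(ρ₁‖ρ₂) ≤ p₂·β_ε(σ₁‖σ₂) + (1 − p₂)·β_ε(ω₁‖ω₂). (Lemma S2: hypothesis-testing error of flagged states.) -/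
/-!
Given tests `M` for `σ₁` against `σ₂` and `N` for `ω₁` against `ω₂`, both succeeding with
probability at least `1 - ε`, the block-diagonal test `diag(M, N)` succeeds on `ρ₁` with probability
`p₁ Tr(σ₁ M) + (1 - p₁) Tr(ω₁ N) ≥ 1 - ε`, and errs on `ρ₂` with probability
`p₂ Tr(σ₂ M) + (1 - p₂) Tr(ω₂ N)`. Taking the infimum over `M` and `N` gives the bound.
-/

open scoped Matrix ComplexOrder

noncomputable section

/-- The optimal hypothesis-testing error
`β_ε(ρ‖σ) = inf { Tr(M σ) : 0 ≤ M ≤ I, Tr(ρ M) ≥ 1 - ε }`. -/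
noncomputable def betaErr {n : Type*} [Fintype n] [DecidableEq n] (ε : ℝ)
    (ρ σ : Matrix n n ℂ) : ℝ :=
  sInf {x : ℝ | ∃ M : Matrix n n ℂ, M.PosSemidef ∧ (1 - M).PosSemidef ∧
    1 - ε ≤ ((ρ * M).trace).re ∧ x = ((σ * M).trace).re}

/-- The hypothesis testing relative entropy `D_H^ε(ρ‖σ) = -log β_ε(ρ‖σ)`. -/
noncomputable def DH {n : Type*} [Fintype n] [DecidableEq n] (ε : ℝ)
    (ρ σ : Matrix n n ℂ) : ℝ :=
  - Real.log (betaErr ε ρ σ)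

namespace Matrix

variable {l m : Type*} [Fintype l] [Fintype m]

open scoped MatrixOrder in
theorem PosSemidef.trace_mul_nonneg {𝕜 : Type*} [RCLike 𝕜] {A B : Matrix l l 𝕜}
    (hA : A.PosSemidef) (hB : B.PosSemidef) : 0 ≤ (A * B).trace := by
  classical
  obtain ⟨C, rfl⟩ := CStarAlgebra.nonneg_iff_eq_star_mul_self.mp hB.nonneg
  rw [star_eq_conjTranspose, ← Matrix.mul_assoc, trace_mul_comm, ← Matrix.mul_assoc]
  exact (hA.mul_mul_conjTranspose_same C).trace_nonneg

theorem PosSemidef.fromBlocks_zero {𝕜 : Type*} [RCLike 𝕜] {A : Matrix l l 𝕜}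
    {D : Matrix m m 𝕜} (hA : A.PosSemidef) (hD : D.PosSemidef) :
    (fromBlocks A 0 0 D).PosSemidef := by
  refine .of_dotProduct_mulVec_nonneg (hA.isHermitian.fromBlocks (by simp) hD.isHermitian)
    fun x => ?_
  rw [← Sum.elim_comp_inl_inr x, fromBlocks_mulVec, Function.star_sumElim]
  simpa [sumElim_dotProduct_sumElim] using
    add_nonneg (hA.dotProduct_mulVec_nonneg _) (hD.dotProduct_mulVec_nonneg _)

omit [Fintype l] [Fintype m] in
theorem one_sub_fromBlocks_zero {R : Type*} [DecidableEq l] [DecidableEq m] [AddGroupWithOne R]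
    (M : Matrix l l R) (N : Matrix m m R) :
    1 - fromBlocks M 0 0 N = fromBlocks (1 - M) 0 0 (1 - N) := by
  rw [← fromBlocks_one, sub_eq_add_neg, fromBlocks_neg, fromBlocks_add]
  simp [sub_eq_add_neg]

theorem re_trace_fromBlocks_smul_mul_fromBlocks (s t : ℝ) (A M : Matrix l l ℂ)
    (B N : Matrix m m ℂ) :
    ((fromBlocks (s • A) 0 0 (t • B) * fromBlocks M 0 0 N).trace).re =
      s * ((A * M).trace).re + t * ((B * N).trace).re := by
  simp [fromBlocks_multiply, trace, Fintype.sum_sum_type, Finset.mul_sum]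

end Matrix

theorem le_mul_csInf {S : Set ℝ} (hS : S.Nonempty) {c w : ℝ} (hc : 0 ≤ c)
    (h : ∀ x ∈ S, w ≤ c * x) : w ≤ c * sInf S := by
  rw [← smul_eq_mul, ← Real.sInf_smul_of_nonneg hc]
  exact le_csInf hS.smul_set (by rintro _ ⟨x, hx, rfl⟩; exact h x hx)

theorem le_mul_csInf_add_mul_csInf {S T : Set ℝ} (hS : S.Nonempty) (hT : T.Nonempty)
    {c d z : ℝ} (hc : 0 ≤ c) (hd : 0 ≤ d) (h : ∀ x ∈ S, ∀ y ∈ T, z ≤ c * x + d * y) :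
    z ≤ c * sInf S + d * sInf T := by
  have hy : ∀ y ∈ T, z - c * sInf S ≤ d * y := fun y hy => by
    linarith [le_mul_csInf hS hc fun x hx => (by linarith [h x hx y hy] : z - d * y ≤ c * x)]
  linarith [le_mul_csInf hT hd hy]

section betaErr

variable {n n' : Type*} [Fintype n] [DecidableEq n] [Fintype n'] [DecidableEq n'] {ε : ℝ}

theorem betaErr_le {ρ σ M : Matrix n n ℂ} (hσ : σ.PosSemidef) (hM : M.PosSemidef)
    (hM₁ : (1 - M).PosSemidef) (hρM : 1 - ε ≤ ((ρ * M).trace).re) :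
    betaErr ε ρ σ ≤ ((σ * M).trace).re :=
  csInf_le
    ⟨0, by
      rintro _ ⟨N, hN, -, -, rfl⟩
      exact (Complex.nonneg_iff.mp (hσ.trace_mul_nonneg hN)).1⟩
    ⟨M, hM, hM₁, hρM, rfl⟩

/-- The trace hypotheses make the sets of tests nonempty (they contain `1`); otherwise `betaErr`
would be the junk value `sInf ∅ = 0`. -/
theorem le_mul_betaErr_add_mul_betaErr {ρ σ : Matrix n n ℂ} {ρ' σ' : Matrix n' n' ℂ}
    (hρ : 1 - ε ≤ ρ.trace.re) (hρ' : 1 - ε ≤ ρ'.trace.re) {c d z : ℝ} (hc : 0 ≤ c) (hd : 0 ≤ d)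
    (h : ∀ (M : Matrix n n ℂ) (N : Matrix n' n' ℂ), M.PosSemidef → (1 - M).PosSemidef →
      1 - ε ≤ ((ρ * M).trace).re → N.PosSemidef → (1 - N).PosSemidef →
      1 - ε ≤ ((ρ' * N).trace).re → z ≤ c * ((σ * M).trace).re + d * ((σ' * N).trace).re) :
    z ≤ c * betaErr ε ρ σ + d * betaErr ε ρ' σ' := by
  unfold betaErr
  refine le_mul_csInf_add_mul_csInf ?_ ?_ hc hd ?_
  · exact ⟨_, 1, .one, by simpa using .zero, by simpa using hρ, rfl⟩
  · exact ⟨_, 1, .one, by simpa using .zero, by simpa using hρ', rfl⟩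
  rintro _ ⟨M, hM, hM₁, hρM, rfl⟩ _ ⟨N, hN, hN₁, hρN, rfl⟩
  exact h M N hM hM₁ hρM hN hN₁ hρN

end betaErr

open Matrix in
theorem flagged_state_beta_general {a b : ℕ}
    (σ₁ σ₂ : Matrix (Fin a) (Fin a) ℂ) (hσ₁ : IsDensity σ₁) (hσ₂ : IsDensity σ₂)
    (ω₁ ω₂ : Matrix (Fin b) (Fin b) ℂ) (hω₁ : IsDensity ω₁) (hω₂ : IsDensity ω₂)
    (p₁ p₂ : ℝ) (hp₁ : p₁ ∈ Set.Icc (0 : ℝ) 1) (hp₂ : p₂ ∈ Set.Icc (0 : ℝ) 1)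
    (ε : ℝ) (hε0 : 0 ≤ ε) :
    betaErr ε
        (Matrix.fromBlocks (p₁ • σ₁) 0 0 ((1 - p₁) • ω₁))
        (Matrix.fromBlocks (p₂ • σ₂) 0 0 ((1 - p₂) • ω₂)) ≤
      p₂ * betaErr ε σ₁ σ₂ + (1 - p₂) * betaErr ε ω₁ ω₂ := by
  obtain ⟨hp₁0, hp₁1⟩ := hp₁
  obtain ⟨hp₂0, hp₂1⟩ := hp₂
  have hρ₂ : (fromBlocks (p₂ • σ₂) 0 0 ((1 - p₂) • ω₂)).PosSemidef :=
    (hσ₂.1.smul hp₂0).fromBlocks_zero (hω₂.1.smul (sub_nonneg.2 hp₂1))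
  refine le_mul_betaErr_add_mul_betaErr (by simp [hσ₁.2, hε0]) (by simp [hω₁.2, hε0]) hp₂0
    (sub_nonneg.2 hp₂1) fun M N hM hM₁ hσM hN hN₁ hωN => ?_
  rw [← re_trace_fromBlocks_smul_mul_fromBlocks]
  refine betaErr_le hρ₂ (hM.fromBlocks_zero hN)
    (by rw [one_sub_fromBlocks_zero]; exact hM₁.fromBlocks_zero hN₁) ?_
  rw [re_trace_fromBlocks_smul_mul_fromBlocks]
  linarith [mul_le_mul_of_nonneg_left hσM hp₁0, mul_le_mul_of_nonneg_left hωN (sub_nonneg.2 hp₁1)]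

/-- **Lemma S2.**  Hypothesis-testing error of flagged (block-diagonal) states:
`β_ε(ρ₁‖ρ₂) ≤ p₂ β_ε(σ₁‖σ₂) + (1 - p₂) β_ε(ω₁‖ω₂)` where
`ρᵢ = diag(pᵢ σᵢ, (1 - pᵢ) ωᵢ)`. -/
theorem flagged_state_beta {a b : ℕ}
    (σ₁ σ₂ : Matrix (Fin a) (Fin a) ℂ) (hσ₁ : IsDensity σ₁) (hσ₂ : IsDensity σ₂)
    (ω₁ ω₂ : Matrix (Fin b) (Fin b) ℂ) (hω₁ : IsDensity ω₁) (hω₂ : IsDensity ω₂)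
    (p₁ p₂ : ℝ) (hp₁ : p₁ ∈ Set.Icc (0 : ℝ) 1) (hp₂ : p₂ ∈ Set.Icc (0 : ℝ) 1)
    (ε : ℝ) (hε0 : 0 ≤ ε) (hε1 : ε < 1) :
    betaErr ε
        (Matrix.fromBlocks (p₁ • σ₁) 0 0 ((1 - p₁) • ω₁))
        (Matrix.fromBlocks (p₂ • σ₂) 0 0 ((1 - p₂) • ω₂)) ≤
      p₂ * betaErr ε σ₁ σ₂ + (1 - p₂) * betaErr ε ω₁ ω₂ :=
  flagged_state_beta_general σ₁ σ₂ hσ₁ hσ₂ ω₁ ω₂ hω₁ hω₂ p₁ p₂ hp₁ hp₂ ε hε0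
end
end
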